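/- Let A, B, H be n×n complex matrices and let α, λ be complex scalars. Then the characteristic determinant of the gradient-tracking system matrix satisfies the block-determinant identity det([[A - λI, -αI],[H·A, B - αH - λI]]) = det((B - λI)·(A - λI) + αλ·H), where the left-hand side is the determinant of the indicated 2n×2n block matrix. -/

import Mathlib

open Matrix

/-- Block-determinant identity for the characteristic determinant of the
gradient-tracking system matrix:
`det [[A - λI, -αI], [H·A, B - αH - λI]] = det ((B - λI)(A - λI) + αλ·H)`. -/
theorem gradientTracking_block_det {n : ℕ}
    (A B H : Matrix (Fin n) (Fin n) ℂ) (α lam : ℂ) :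
    (Matrix.fromBlocks (A - lam • 1) (-(α • 1)) (H * A) (B - α • H - lam • 1)).det
      = ((B - lam • 1) * (A - lam • 1) + (α * lam) • H).det := by
  rcases eq_or_ne α 0 with rfl | hα
  · simp [Matrix.det_fromBlocks_zero₁₂, Matrix.det_mul, mul_comm]
  · set W : Matrix (Fin n) (Fin n) ℂ := α⁻¹ • (B - lam • 1 - 1) - H with hW
    have hdet1 : (Matrix.fromBlocks (1 : Matrix (Fin n) (Fin n) ℂ) 0 W 1).det = 1 := by
      simp [Matrix.det_fromBlocks_zero₁₂]
    have hmul : Matrix.fromBlocks (1 : Matrix (Fin n) (Fin n) ℂ) 0 W 1 *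
        Matrix.fromBlocks (A - lam • 1) (-(α • 1)) (H * A) (B - α • H - lam • 1)
        = Matrix.fromBlocks (A - lam • 1) (-(α • 1)) (W * (A - lam • 1) + H * A) 1 := by
      have h22 : W * -(α • 1) + 1 * (B - α • H - lam • 1) = (1 : Matrix (Fin n) (Fin n) ℂ) := by
        simp only [hW, Matrix.mul_neg, Matrix.mul_smul, Matrix.mul_one, Matrix.one_mul]
        match_scalars <;> field_simp <;> ring
      rw [Matrix.fromBlocks_multiply, h22]
      simp
    have h1 : (Matrix.fromBlocks (A - lam • 1) (-(α • 1)) (H * A)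
        (B - α • H - lam • 1)).det
        = (Matrix.fromBlocks (A - lam • 1) (-(α • 1)) (W * (A - lam • 1) + H * A) 1).det := by
      rw [← hmul, Matrix.det_mul, hdet1, one_mul]
    rw [h1, Matrix.det_fromBlocks_one₂₂]
    congr 1
    simp only [hW, Matrix.neg_mul, sub_neg_eq_add, Matrix.smul_mul, Matrix.sub_mul,
      Matrix.mul_sub, Matrix.add_mul, Matrix.mul_add, smul_sub, smul_add, smul_smul,
      Matrix.one_mul, Matrix.mul_one, Matrix.mul_smul]
    set_option linter.unnecessarySeqFocus false in
    match_scalars <;> field_simp <;> ring
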